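/- Let K be a field of characteristic p > 0 and K ⊆ K' a finite purely inseparable field extension with λ^{p^n} ∈ K for all λ ∈ K'. Then there exists a field homomorphism i : K' → K such that the composite K ⊆ K' → K equals the n-fold Frobenius map λ ↦ λ^{p^n} on K. -/
import Mathlib


open AlgebraicGeometry CategoryTheory CategoryTheory.Limits

noncomputable section

universe u

/-- `Spec` of a field (or ring). -/
abbrev SpecOf (K : Type u) [CommRing K] : Scheme.{u} := Spec (CommRingCat.of K)

/-- The morphism of spectra induced by a ring extension. -/
def specMapAlg (K L : Type u) [CommRing K] [CommRing L] [Algebra K L] :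
    SpecOf L ⟶ SpecOf K := Spec.map (CommRingCat.ofHom (algebraMap K L))

/-- Base change `X ⊗_K L` of a `K`-scheme along a field extension `K ⊆ L`. -/
def baseChange {K : Type u} [CommRing K] {X : Scheme.{u}} (f : X ⟶ SpecOf K)
    (L : Type u) [CommRing L] [Algebra K L] : Scheme.{u} :=
  pullback f (specMapAlg K L)

/-- Structure morphism of the base change `X ⊗_K L` over `L`. -/
def baseChangeStruct {K : Type u} [CommRing K] {X : Scheme.{u}} (f : X ⟶ SpecOf K)
    (L : Type u) [CommRing L] [Algebra K L] : baseChange f L ⟶ SpecOf L :=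
  pullback.snd f (specMapAlg K L)

/-- A `K`-scheme is geometrically integral if all its base changes to field
extensions are integral. -/
def IsGeometricallyIntegral {K : Type u} [Field K] {X : Scheme.{u}}
    (f : X ⟶ SpecOf K) : Prop :=
  ∀ (L : Type u) [Field L] [Algebra K L], IsIntegral (baseChange f L)

/-- A scheme is normal if it is integral with integrally closed stalks. -/
def IsNormalScheme (X : Scheme.{u}) : Prop :=
  IsIntegral X ∧ ∀ x : X, IsIntegrallyClosed (X.presheaf.stalk x)

/-- A `K`-scheme is geometrically normal if all its base changes to field
extensions are normal. -/
def IsGeometricallyNormal {K : Type u} [Field K] {X : Scheme.{u}}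
    (f : X ⟶ SpecOf K) : Prop :=
  ∀ (L : Type u) [Field L] [Algebra K L], IsNormalScheme (baseChange f L)

/-- `ν : Y ⟶ X` is the normalization of the integral scheme `X`:  `Y` is normal,
`ν` is integral and dominant, and every dominant morphism from a normal scheme
factors uniquely through `ν`. -/
def IsNormalization {Y X : Scheme.{u}} (ν : Y ⟶ X) : Prop :=
  IsNormalScheme Y ∧ IsIntegralHom ν ∧ IsDominant ν ∧
    ∀ (Z : Scheme.{u}) (g : Z ⟶ X), IsNormalScheme Z → IsDominant g →
      ∃! h : Z ⟶ Y, h ≫ ν = g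

/-- The absolute Frobenius of `Spec K`. -/
def frobSpec (K : Type u) [Field K] (p : ℕ) [Fact p.Prime] [CharP K p] :
    SpecOf K ⟶ SpecOf K := Spec.map (CommRingCat.ofHom (frobenius K p))

/-- The `n`-fold iterated Frobenius of `Spec K`. -/
def iterFrobSpec (K : Type u) [Field K] (p : ℕ) [Fact p.Prime] [CharP K p] (n : ℕ) :
    SpecOf K ⟶ SpecOf K := Spec.map (CommRingCat.ofHom (iterateFrobenius K p n))

/-- The Frobenius pullback `X^{(p)}`. -/
def frobPullback {K : Type u} [Field K] {X : Scheme.{u}} (f : X ⟶ SpecOf K)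
    (p : ℕ) [Fact p.Prime] [CharP K p] : Scheme.{u} := pullback f (frobSpec K p)

/-- The iterated Frobenius pullback `X^{(pⁿ)}`. -/
def iterFrobPullback {K : Type u} [Field K] {X : Scheme.{u}} (f : X ⟶ SpecOf K)
    (p : ℕ) [Fact p.Prime] [CharP K p] (n : ℕ) : Scheme.{u} :=
  pullback f (iterFrobSpec K p n)

/-- Universal homeomorphisms of schemes. -/
def UniversalHomeomorphism : MorphismProperty Scheme.{u} :=
  MorphismProperty.universally (AlgebraicGeometry.topologically @IsHomeomorph)

end

/-- a finite purely inseparable extension `K ⊆ K'` with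
`λ^{pⁿ} ∈ K` for all `λ ∈ K'` admits a homomorphism `i : K' → K` whose
composite with the inclusion is the `n`-fold Frobenius of `K`. -/
theorem stmt_2 {K K' : Type u} [Field K] [Field K'] [Algebra K K']
    (p : ℕ) [Fact p.Prime] [CharP K p] [FiniteDimensional K K']
    [IsPurelyInseparable K K'] (n : ℕ)
    (h : ∀ x : K', x ^ p ^ n ∈ (algebraMap K K').range) :
    ∃ i : K' →+* K, ∀ x : K, i (algebraMap K K' x) = x ^ p ^ n := by
  haveI : CharP K' p := charP_of_injective_algebraMap (algebraMap K K').injective p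
  have inj := (algebraMap K K').injective
  choose f hf using h
  refine ⟨⟨⟨⟨f, ?_⟩, ?_⟩, ?_, ?_⟩, ?_⟩
  · apply inj; rw [hf]; simp
  · intro x y; apply inj; rw [map_mul, hf, hf, hf, mul_pow]
  · apply inj; rw [hf, map_zero, zero_pow (pow_ne_zero n (Fact.out : p.Prime).ne_zero)]
  · intro x y; apply inj; rw [map_add, hf, hf, hf, add_pow_char_pow]
  · intro x
    apply inj
    show algebraMap K K' (f _) = _
    rw [hf, map_pow]
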